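/- arXiv:1207.4546 — 5 statements merged into one kernel-verified Lean document; each statement's English description precedes it below -/
import Mathlib

section
/- For a finite alphabet A of positive integers and 0 ≤ s ≤ 2, the function ζ_k(s) = ∑_{D ∈ V_A(k)} ⟨D⟩^{-s} satisfies 2^{-s} ζ_j(s) ζ_k(s) ≤ ζ_{j+k}(s) ≤ ζ_j(s) ζ_k(s) for all positive integers j, k. -/
/-- The continuant of a finite word of positive integers. -/
def cont : List ℕ → ℕ
  | [] => 1
  | [a] => a
  | a :: b :: l => a * cont (b :: l) + cont l

lemma cont_one_le : ∀ (l : List ℕ), (∀ a ∈ l, 1 ≤ a) → 1 ≤ cont l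
  | [], _ => le_refl _
  | [a], h => h a (by simp)
  | a :: b :: l, h => by
    have h1 : 1 ≤ a := h a (by simp)
    have h2 : 1 ≤ cont (b :: l) := cont_one_le (b :: l) (fun x hx => h x (by simp [hx]))
    simp only [cont]
    nlinarith

lemma cont_cons_le {b : ℕ} (l : List ℕ) (hb : 1 ≤ b) : cont l ≤ cont (b :: l) := by
  cases l with
  | nil => simpa [cont] using hb
  | cons c l =>
    show cont (c :: l) ≤ b * cont (c :: l) + cont l
    nlinarith [Nat.zero_le (cont l)]

lemma cont_append : ∀ (D B : List ℕ), D ≠ [] → B ≠ [] → (∀ a ∈ D, 1 ≤ a) →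
    (∀ a ∈ B, 1 ≤ a) →
    cont D * cont B ≤ cont (D ++ B) ∧ cont (D ++ B) ≤ 2 * (cont D * cont B)
  | [], _, hD, _, _, _ => absurd rfl hD
  | [a], B, _, hB, hD1, hB1 => by
    obtain ⟨b, l, rfl⟩ : ∃ b l, B = b :: l := by
      cases B with
      | nil => exact absurd rfl hB
      | cons b l => exact ⟨b, l, rfl⟩
    have ha : 1 ≤ a := hD1 a (by simp)
    have hb : 1 ≤ b := hB1 b (by simp)
    have h1 : cont l ≤ cont (b :: l) := cont_cons_le l hb
    have : ([a] ++ (b :: l) : List ℕ) = a :: b :: l := rfl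
    rw [this]
    have hc : cont (a :: b :: l) = a * cont (b :: l) + cont l := rfl
    have hca : cont [a] = a := rfl
    rw [hc, hca]
    constructor
    · exact Nat.le_add_right _ _
    · nlinarith
  | a :: b :: e, B, _, hB, hD1, hB1 => by
    have ha : 1 ≤ a := hD1 a (by simp)
    have IH1 := cont_append (b :: e) B (by simp) hB
      (fun x hx => hD1 x (List.mem_cons_of_mem _ hx)) hB1
    have h2 : ((a :: b :: e) ++ B : List ℕ) = a :: ((b :: e) ++ B) := rfl
    have hBne : ∃ c L, (b :: e) ++ B = c :: L := by
      cases h : (b :: e) ++ B with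
      | nil => simp at h
      | cons c L => exact ⟨c, L, rfl⟩
    obtain ⟨c, L, hcL⟩ := hBne
    cases e with
    | nil =>
      -- D = [a, b], D ++ B = a :: b :: B
      have hD : cont [a, b] = a * b + 1 := rfl
      have hccat : cont ((a :: b :: []) ++ B) = a * cont (b :: B) + cont B := by
        obtain ⟨b', l, rfl⟩ : ∃ b' l, B = b' :: l := by
          cases B with
          | nil => exact absurd rfl hB
          | cons b' l => exact ⟨b', l, rfl⟩
        rfl
      have hsb : (([b] : List ℕ) ++ B) = b :: B := rfl
      rw [hsb] at IH1
      have hcb : cont [b] = b := rfl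
      rw [hcb] at IH1
      rw [hccat, hD]
      constructor
      · nlinarith [IH1.1]
      · nlinarith [IH1.2, cont_one_le B (fun x hx => hB1 x hx)]
    | cons c' e' =>
      have IH2 := cont_append (c' :: e') B (by simp) hB
        (fun x hx => hD1 x (List.mem_cons_of_mem _ (List.mem_cons_of_mem _ hx))) hB1
      have hccat : cont ((a :: b :: c' :: e') ++ B)
          = a * cont ((b :: c' :: e') ++ B) + cont ((c' :: e') ++ B) := rfl
      have hD : cont (a :: b :: c' :: e') = a * cont (b :: c' :: e') + cont (c' :: e') := rfl
      rw [hccat, hD]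
      constructor
      · nlinarith [IH1.1, IH2.1]
      · nlinarith [IH1.2, IH2.2]

/-- `ζ_k(s,A) = ∑_{D ∈ V_A(k)} ⟨D⟩^{-s}`, the sum over all words of length `k`
with letters in the finite alphabet `A`. -/
noncomputable def zetaA (A : Finset ℕ) (s : ℝ) (k : ℕ) : ℝ :=
  ∑ D : Fin k → A, ((cont (List.ofFn fun i => ((D i : ℕ)))) : ℝ) ^ (-s)

/-- For `0 ≤ s ≤ 2` and `j, k ≥ 1`:
`2^{-s} ζ_j(s) ζ_k(s) ≤ ζ_{j+k}(s) ≤ ζ_j(s) ζ_k(s)`. -/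
theorem zeta_submultiplicative (A : Finset ℕ) (hA : ∀ a ∈ A, 1 ≤ a) (s : ℝ)
    (hs0 : 0 ≤ s) (hs2 : s ≤ 2) (j k : ℕ) (hj : 1 ≤ j) (hk : 1 ≤ k) :
    (2 : ℝ) ^ (-s) * (zetaA A s j * zetaA A s k) ≤ zetaA A s (j + k) ∧
      zetaA A s (j + k) ≤ zetaA A s j * zetaA A s k := by
  -- rewrite zetaA (j+k) as a double sum over pairs
  have hsum : zetaA A s (j + k) = ∑ p : (Fin j → A) × (Fin k → A),
      ((cont ((List.ofFn fun i => ((p.1 i : ℕ))) ++ (List.ofFn fun i => ((p.2 i : ℕ))))) : ℝ)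
        ^ (-s) := by
    rw [zetaA, ← Equiv.sum_comp (Fin.appendEquiv j k)]
    refine Finset.sum_congr rfl fun p _ => ?_
    have hfun : (fun i : Fin (j + k) => ((Fin.appendEquiv j k p i : A) : ℕ)) =
        Fin.append (fun i => ((p.1 i : ℕ))) (fun i => ((p.2 i : ℕ))) := by
      funext i
      show ((Fin.append p.1 p.2 i : A) : ℕ) = _
      simp only [Fin.append, Fin.addCases]
      by_cases h : (i : ℕ) < j <;> simp [h]
    rw [show (List.ofFn fun i => ((Fin.appendEquiv j k p i : A) : ℕ)) =
        List.ofFn (Fin.append (fun i => ((p.1 i : ℕ))) (fun i => ((p.2 i : ℕ)))) from by rw [hfun],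
      List.ofFn_fin_append]
  have key : ∀ p : (Fin j → A) × (Fin k → A),
      ∀ q ∈ [(1:ℕ)], True := fun _ _ _ => trivial
  -- pointwise facts
  have hfacts : ∀ p : (Fin j → A) × (Fin k → A),
      let D := List.ofFn fun i => ((p.1 i : ℕ))
      let B := List.ofFn fun i => ((p.2 i : ℕ))
      cont D * cont B ≤ cont (D ++ B) ∧ cont (D ++ B) ≤ 2 * (cont D * cont B)
        ∧ 1 ≤ cont D ∧ 1 ≤ cont B := by
    intro p
    have hD1 : ∀ a ∈ List.ofFn fun i => ((p.1 i : ℕ)), 1 ≤ a := by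
      intro a haa
      rw [List.mem_ofFn] at haa
      obtain ⟨i, rfl⟩ := haa
      exact hA _ (p.1 i).2
    have hB1 : ∀ a ∈ List.ofFn fun i => ((p.2 i : ℕ)), 1 ≤ a := by
      intro a haa
      rw [List.mem_ofFn] at haa
      obtain ⟨i, rfl⟩ := haa
      exact hA _ (p.2 i).2
    have hDne : (List.ofFn fun i => ((p.1 i : ℕ))) ≠ [] := by
      simp [List.ofFn_eq_nil_iff]; omega
    have hBne : (List.ofFn fun i => ((p.2 i : ℕ))) ≠ [] := by
      simp [List.ofFn_eq_nil_iff]; omega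
    have := cont_append _ _ hDne hBne hD1 hB1
    exact ⟨this.1, this.2, cont_one_le _ hD1, cont_one_le _ hB1⟩
  have hprod : zetaA A s j * zetaA A s k = ∑ p : (Fin j → A) × (Fin k → A),
      ((cont (List.ofFn fun i => ((p.1 i : ℕ)))) : ℝ) ^ (-s) *
        ((cont (List.ofFn fun i => ((p.2 i : ℕ)))) : ℝ) ^ (-s) := by
    rw [zetaA, zetaA, Finset.sum_mul_sum, ← Fintype.sum_prod_type']
  constructor
  · rw [hsum, hprod, Finset.mul_sum]
    refine Finset.sum_le_sum fun p _ => ?_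
    obtain ⟨h1, h2, hD, hB⟩ := hfacts p
    set D := List.ofFn fun i => ((p.1 i : ℕ))
    set B := List.ofFn fun i => ((p.2 i : ℕ))
    have hDpos : (0:ℝ) < (cont D : ℝ) := by exact_mod_cast hD.trans_lt' zero_lt_one
    have hBpos : (0:ℝ) < (cont B : ℝ) := by exact_mod_cast hB.trans_lt' zero_lt_one
    have : (2:ℝ) ^ (-s) * ((cont D : ℝ) ^ (-s) * (cont B : ℝ) ^ (-s))
        = ((2 * (cont D * cont B) : ℕ) : ℝ) ^ (-s) := by
      push_cast
      rw [Real.mul_rpow (by norm_num) (by positivity), Real.mul_rpow hDpos.le hBpos.le]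
    rw [this]
    have hone : ∀ a ∈ D ++ B, 1 ≤ a := by
      intro a haa
      rcases List.mem_append.mp haa with h | h
      · rw [List.mem_ofFn] at h; obtain ⟨i, rfl⟩ := h; exact hA _ (p.1 i).2
      · rw [List.mem_ofFn] at h; obtain ⟨i, rfl⟩ := h; exact hA _ (p.2 i).2
    refine Real.rpow_le_rpow_of_nonpos ?_ ?_ (neg_nonpos.mpr hs0)
    · exact_mod_cast Nat.lt_of_lt_of_le Nat.zero_lt_one (cont_one_le _ hone)
    · exact_mod_cast h2
  · rw [hsum, hprod]
    refine Finset.sum_le_sum fun p _ => ?_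
    obtain ⟨h1, h2, hD, hB⟩ := hfacts p
    set D := List.ofFn fun i => ((p.1 i : ℕ))
    set B := List.ofFn fun i => ((p.2 i : ℕ))
    have hDpos : (0:ℝ) < (cont D : ℝ) := by exact_mod_cast hD.trans_lt' zero_lt_one
    have hBpos : (0:ℝ) < (cont B : ℝ) := by exact_mod_cast hB.trans_lt' zero_lt_one
    have hpos : (0:ℝ) < ((cont D * cont B : ℕ) : ℝ) := by push_cast; positivity
    have := Real.rpow_le_rpow_of_nonpos hpos (y := ((cont (D ++ B) : ℕ) : ℝ))
      (by exact_mod_cast h1) (neg_nonpos.mpr hs0)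
    calc ((cont (D ++ B) : ℕ) : ℝ) ^ (-s) ≤ ((cont D * cont B : ℕ) : ℝ) ^ (-s) := this
      _ = (cont D : ℝ) ^ (-s) * (cont B : ℝ) ^ (-s) := by
          push_cast; rw [Real.mul_rpow hDpos.le hBpos.le]
end

section
/- Let A be a finite alphabet with δ_A > 1/2 and A_max = max A. With F(x) = #{D ∈ V_{A²} : ⟨D⟩ ≤ x}, for every real x ≥ 4·A_max² one has F(x) − F(x/2) ≤ 4·x^{2δ_A}. -/
/-- `F(x)` = number of nonempty words of even length over `A` whose continuant is `≤ x`. -/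
noncomputable def FA (A : Finset ℕ) (x : ℝ) : ℕ :=
  Set.ncard {D : List ℕ | D ≠ [] ∧ (∀ d ∈ D, d ∈ A) ∧ Even D.length ∧ (cont D : ℝ) ≤ x}

/-!
Let `S` be the set of even words with `x/2 < ⟨D⟩ ≤ x`, so that `F(x) - F(x/2) = #S`. Since
`⟨E, f₁, f₂⟩ ≥ 2⟨E⟩`, no word of `S` is a proper prefix of another, so `S` is a prefix code: the
concatenations of `k` words of `S` are `(#S)^k` distinct even words, each of continuant at most
`(2x)^k` because `⟨E, F⟩ ≤ 2⟨E⟩⟨F⟩`. Convergence of `ζ(s, A²)` then forces the geometric series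
`∑ (#S · (2x)^{-s})^k` to converge, i.e. `#S < (2x)^s` for all `s > 2δ`, whence
`#S ≤ (2x)^{2δ} ≤ 4x^{2δ}` when `δ ≤ 1`. When `δ ≥ 1` the trivial bound `#S ≤ x² ≤ x^{2δ}` suffices;
it holds because a word is determined by `(⟨D⟩, ⟨D.tail⟩)` and the parity of its length.
-/

section Continuant

variable {l m : List ℕ}

theorem cont_cons_cons (a b : ℕ) (l : List ℕ) :
    cont (a :: b :: l) = a * cont (b :: l) + cont l := rfl

@[simp] theorem cont_singleton (a : ℕ) : cont [a] = a := rfl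

theorem cont_pos (hl : ∀ d ∈ l, 0 < d) : 0 < cont l := by
  induction l using cont.induct with
  | case1 => exact Nat.one_pos
  | case2 a => exact hl a (by simp)
  | case3 a b l ih _ =>
    have ha := hl a (by simp)
    have := ih fun d hd => hl d (List.mem_cons_of_mem a hd)
    rw [cont_cons_cons]; positivity

theorem cont_tail_le (hl : ∀ d ∈ l, 0 < d) : cont l.tail ≤ cont l := by
  match l with
  | [] => rfl
  | [a] => exact hl a (by simp)
  | a :: b :: m =>
    have ha := hl a (by simp)
    rw [List.tail_cons, cont_cons_cons]
    nlinarith [Nat.zero_le (cont m)]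

theorem two_le_cont (hl : ∀ d ∈ l, 0 < d) (hlen : 2 ≤ l.length) : 2 ≤ cont l := by
  match l, hlen with
  | a :: b :: m, _ =>
    have ha := hl a (by simp)
    have h₁ := cont_pos fun d hd => hl d (List.mem_cons_of_mem a hd)
    have h₂ := cont_pos fun d hd => hl d (List.mem_cons_of_mem a (List.mem_cons_of_mem b hd))
    rw [cont_cons_cons]
    nlinarith

theorem cont_mul_cont_le_cont_append (l m : List ℕ) : cont l * cont m ≤ cont (l ++ m) := by
  induction l using cont.induct with
  | case1 => simp [cont]
  | case2 a =>
    match m with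
    | [] => simp [cont]
    | b :: m => simp [cont_cons_cons]
  | case3 a b l ih₁ ih₂ =>
    simp only [List.cons_append, cont_cons_cons] at ih₁ ⊢
    nlinarith

theorem cont_append_le (hl : ∀ d ∈ l, 0 < d) (hm : ∀ d ∈ m, 0 < d) :
    cont (l ++ m) ≤ 2 * cont l * cont m := by
  induction l using cont.induct with
  | case1 => simp [cont]; omega
  | case2 a =>
    match m with
    | [] => simp [cont]; omega
    | b :: m =>
      have ha := hl a (by simp)
      have := cont_tail_le hm
      simp only [List.cons_append, List.nil_append, List.tail_cons, cont_cons_cons,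
        cont_singleton] at this ⊢
      nlinarith
  | case3 a b l ih₁ ih₂ =>
    have h₁ := ih₁ fun d hd => hl d (List.mem_cons_of_mem a hd)
    have h₂ := ih₂ fun d hd => hl d (List.mem_cons_of_mem a (List.mem_cons_of_mem b hd))
    simp only [List.cons_append, cont_cons_cons] at h₁ ⊢
    nlinarith

theorem two_mul_cont_le_cont_append (hm : ∀ d ∈ m, 0 < d) (hlen : 2 ≤ m.length) :
    2 * cont l ≤ cont (l ++ m) :=
  calc 2 * cont l ≤ cont l * cont m := by
        rw [mul_comm]; exact Nat.mul_le_mul_left _ (two_le_cont hm hlen)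
    _ ≤ cont (l ++ m) := cont_mul_cont_le_cont_append l m

theorem eq_nil_or_eq_singleton_one_of_cont_eq_one (hl : ∀ d ∈ l, 0 < d) (h : cont l = 1) :
    l = [] ∨ l = [1] := by
  match l with
  | [] => simp
  | [a] => simp_all
  | a :: b :: m => have := two_le_cont hl (by simp); omega

theorem eq_of_mul_add_eq_mul_add {a a' p r r' : ℕ} (h : a * p + r = a' * p + r')
    (hr : 0 < r) (hrp : r ≤ p) (hr' : 0 < r') (hrp' : r' ≤ p) : a = a' := by
  by_contra hne
  rcases Nat.lt_or_gt_of_ne hne with hlt | hlt <;> nlinarith [Nat.mul_le_mul_right p hlt]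

-- The parity hypothesis is needed: `cont [a, 1] = cont [a + 1]` and `cont [1] = cont []`.
theorem eq_of_cont_eq_of_cont_tail_eq {l l' : List ℕ} (hl : ∀ d ∈ l, 0 < d)
    (hl' : ∀ d ∈ l', 0 < d) (hpar : Even l.length ↔ Even l'.length) (h : cont l = cont l')
    (ht : cont l.tail = cont l'.tail) : l = l' := by
  induction l using cont.induct generalizing l' with
  | case1 =>
    rcases eq_nil_or_eq_singleton_one_of_cont_eq_one hl' h.symm with rfl | rfl
    · rfl
    · simp at hpar
  | case2 a =>
    match l' with
    | [] => simp at hpar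
    | [a'] => simpa using h
    | a' :: b' :: m' =>
      rcases eq_nil_or_eq_singleton_one_of_cont_eq_one (l := b' :: m')
        (fun d hd => hl' d (List.mem_cons_of_mem a' hd)) ht.symm with h | h
      · simp at h
      · obtain ⟨-, rfl⟩ := List.cons_eq_cons.mp h
        simp [Nat.even_add_one] at hpar
  | case3 a b m ih _ =>
    match l' with
    | [] =>
      rcases eq_nil_or_eq_singleton_one_of_cont_eq_one hl h with h | h <;> simp at h
    | [a'] =>
      rcases eq_nil_or_eq_singleton_one_of_cont_eq_one (l := b :: m)
        (fun d hd => hl d (List.mem_cons_of_mem a hd)) ht with h | h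
      · simp at h
      · obtain ⟨-, rfl⟩ := List.cons_eq_cons.mp h
        simp [Nat.even_add_one] at hpar
    | a' :: b' :: m' =>
      have hbm : ∀ d ∈ b :: m, 0 < d := fun d hd => hl d (List.mem_cons_of_mem a hd)
      have hbm' : ∀ d ∈ b' :: m', 0 < d := fun d hd => hl' d (List.mem_cons_of_mem a' hd)
      simp only [List.tail_cons] at ht
      rw [cont_cons_cons, cont_cons_cons, ← ht] at h
      obtain rfl : a = a' := eq_of_mul_add_eq_mul_add h
        (cont_pos fun d hd => hbm d (List.mem_cons_of_mem b hd)) (cont_tail_le hbm)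
        (cont_pos fun d hd => hbm' d (List.mem_cons_of_mem b' hd)) (ht ▸ cont_tail_le hbm')
      have hpar' : Even (b :: m).length ↔ Even (b' :: m').length := by
        simpa only [List.length_cons, Nat.even_add_one, not_iff_not] using hpar
      rw [ih hbm hbm' hpar' ht (by simpa using h)]

end Continuant

theorem injOn_cont_cont_tail :
    Set.InjOn (fun l => (cont l, cont l.tail)) {l : List ℕ | (∀ d ∈ l, 0 < d) ∧ Even l.length} :=
  fun _ hl _ hl' h => eq_of_cont_eq_of_cont_tail_eq hl.1 hl'.1 (iff_of_true hl.2 hl'.2)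
    (Prod.ext_iff.mp h).1 (Prod.ext_iff.mp h).2

theorem cont_flatten_le {L : List (List ℕ)} {y : ℝ} (hpos : ∀ W ∈ L, ∀ d ∈ W, 0 < d)
    (hy : ∀ W ∈ L, 2 * (cont W : ℝ) ≤ y) : (cont L.flatten : ℝ) ≤ y ^ L.length := by
  induction L with
  | nil => simp [cont]
  | cons W R ih =>
    have hR := ih (fun V hV => hpos V (by simp [hV])) (fun V hV => hy V (by simp [hV]))
    have happ : cont (W ++ R.flatten) ≤ 2 * cont W * cont R.flatten :=
      cont_append_le (hpos W (by simp)) fun d hd => by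
        obtain ⟨V, hV, hdV⟩ := List.mem_flatten.mp hd
        exact hpos V (by simp [hV]) d hdV
    calc (cont (W :: R).flatten : ℝ) ≤ 2 * cont W * cont R.flatten := by exact_mod_cast happ
      _ ≤ y * y ^ R.length := by
        have hW := hy W (by simp)
        exact mul_le_mul hW hR (by positivity) (le_trans (by positivity) hW)
      _ = y ^ (W :: R).length := by rw [List.length_cons, pow_succ']

theorem List.injOn_flatten_of_prefix_free {α : Type*} {P : Set (List α)} (hnil : [] ∉ P)
    (hP : ∀ W ∈ P, ∀ W' ∈ P, W <+: W' → W = W') :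
    Set.InjOn List.flatten {L : List (List α) | ∀ W ∈ L, W ∈ P} := by
  intro L hL L' hL' h
  induction L generalizing L' with
  | nil =>
    cases L' with
    | nil => rfl
    | cons W' R' =>
      exact absurd (List.append_eq_nil_iff.mp h.symm).1
        (ne_of_mem_of_not_mem (hL' W' (by simp)) hnil)
  | cons W R ih =>
    cases L' with
    | nil =>
      exact absurd (List.append_eq_nil_iff.mp h).1 (ne_of_mem_of_not_mem (hL W (by simp)) hnil)
    | cons W' R' =>
      simp only [List.flatten_cons] at h
      have hW := hL W (by simp)
      have hW' := hL' W' (by simp)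
      obtain rfl : W = W' := by
        rcases List.prefix_or_prefix_of_prefix (h ▸ List.prefix_append W R.flatten)
          (List.prefix_append W' R'.flatten) with hp | hp
        · exact hP W hW W' hW' hp
        · exact (hP W' hW' W hW hp).symm
      rw [ih (fun V hV => hL V (by simp [hV])) (fun V hV => hL' V (by simp [hV]))
        (List.append_cancel_left h)]

-- `V_{A²}` without the empty word, as in `FA`.
def evenWords (A : Finset ℕ) : Set (List ℕ) :=
  {l | l ≠ [] ∧ (∀ d ∈ l, d ∈ A) ∧ Even l.length}

def dyadicShell (A : Finset ℕ) (x : ℝ) : Set (List ℕ) :=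
  {D ∈ evenWords A | (cont D : ℝ) ∈ Set.Ioc (x / 2) x}

section Counting

variable {A : Finset ℕ}

theorem pos_of_mem_evenWords (hpos : ∀ a ∈ A, 0 < a) {D : List ℕ} (hD : D ∈ evenWords A) :
    ∀ d ∈ D, 0 < d :=
  fun d hd => hpos d (hD.2.1 d hd)

theorem mapsTo_cont_cont_tail (hpos : ∀ a ∈ A, 0 < a) (x : ℝ) :
    Set.MapsTo (fun l => (cont l, cont l.tail)) {D ∈ evenWords A | (cont D : ℝ) ≤ x}
      (Finset.Icc 1 ⌊x⌋₊ ×ˢ Finset.Icc 1 ⌊x⌋₊ : Finset (ℕ × ℕ)) := by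
  intro D ⟨hD, hx⟩
  have hD₀ := pos_of_mem_evenWords hpos hD
  have hle : cont D ≤ ⌊x⌋₊ := Nat.le_floor hx
  simp only [Finset.coe_product, Set.mem_prod, Finset.coe_Icc, Set.mem_Icc]
  exact ⟨⟨cont_pos hD₀, hle⟩, cont_pos (fun d hd => hD₀ d (List.mem_of_mem_tail hd)),
    (cont_tail_le hD₀).trans hle⟩

theorem injOn_cont_cont_tail_evenWords (hpos : ∀ a ∈ A, 0 < a) (x : ℝ) :
    Set.InjOn (fun l => (cont l, cont l.tail)) {D ∈ evenWords A | (cont D : ℝ) ≤ x} :=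
  injOn_cont_cont_tail.mono fun D hD =>
    (⟨pos_of_mem_evenWords hpos hD.1, hD.1.2.2⟩ : (∀ d ∈ D, 0 < d) ∧ Even D.length)

theorem finite_evenWords_cont_le (hpos : ∀ a ∈ A, 0 < a) (x : ℝ) :
    {D ∈ evenWords A | (cont D : ℝ) ≤ x}.Finite :=
  .of_injOn (mapsTo_cont_cont_tail hpos x) (injOn_cont_cont_tail_evenWords hpos x)
    (Finset.finite_toSet _)

theorem ncard_evenWords_cont_le_le (hpos : ∀ a ∈ A, 0 < a) {x : ℝ} (hx : 0 ≤ x) :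
    ({D ∈ evenWords A | (cont D : ℝ) ≤ x}.ncard : ℝ) ≤ x ^ 2 := by
  have h := Set.ncard_le_ncard_of_injOn _ (mapsTo_cont_cont_tail hpos x)
    (injOn_cont_cont_tail_evenWords hpos x)
  rw [Set.ncard_coe_finset, Finset.card_product, Nat.card_Icc, Nat.add_sub_cancel] at h
  calc ({D ∈ evenWords A | (cont D : ℝ) ≤ x}.ncard : ℝ) ≤ ⌊x⌋₊ * ⌊x⌋₊ := by exact_mod_cast h
    _ ≤ x ^ 2 := by rw [sq]; gcongr <;> exact Nat.floor_le hx

theorem dyadicShell_subset {x : ℝ} :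
    dyadicShell A x ⊆ {D ∈ evenWords A | (cont D : ℝ) ≤ x} :=
  fun _ hD => ⟨hD.1, hD.2.2⟩

theorem FA_eq_ncard (x : ℝ) : FA A x = {D ∈ evenWords A | (cont D : ℝ) ≤ x}.ncard := by
  simp only [FA, evenWords, Set.sep_ofPred, and_assoc]

theorem FA_sub_FA_half (hpos : ∀ a ∈ A, 0 < a) {x : ℝ} (hx : 0 ≤ x) :
    (FA A x : ℝ) - FA A (x / 2) = (dyadicShell A x).ncard := by
  have hsub : {D ∈ evenWords A | (cont D : ℝ) ≤ x / 2} ⊆ {D ∈ evenWords A | (cont D : ℝ) ≤ x} :=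
    fun D ⟨hD, h⟩ => ⟨hD, h.trans (by linarith)⟩
  have hshell : dyadicShell A x =
      {D ∈ evenWords A | (cont D : ℝ) ≤ x} \ {D ∈ evenWords A | (cont D : ℝ) ≤ x / 2} := by
    ext D
    simp only [dyadicShell, Set.mem_Ioc, Set.mem_sdiff, Set.mem_ofPred_eq, not_and, not_le]
    tauto
  rw [FA_eq_ncard, FA_eq_ncard, hshell, Set.ncard_sdiff hsub (finite_evenWords_cont_le hpos _),
    Nat.cast_sub (Set.ncard_le_ncard hsub (finite_evenWords_cont_le hpos _))]

theorem eq_of_prefix_of_mem_dyadicShell (hpos : ∀ a ∈ A, 0 < a) {x : ℝ} {W W' : List ℕ}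
    (hW : W ∈ dyadicShell A x) (hW' : W' ∈ dyadicShell A x) (h : W <+: W') : W = W' := by
  obtain ⟨t, rfl⟩ := h
  by_contra hne
  have ht : t ≠ [] := fun ht => hne (by simp [ht])
  have htlen : 2 ≤ t.length := by
    have heven : Even t.length := by
      have h := hW'.1.2.2
      rw [List.length_append, Nat.even_add] at h
      exact h.mp hW.1.2.2
    obtain ⟨k, hk⟩ := heven
    have := List.length_pos_iff.mpr ht
    omega
  have hdouble : 2 * cont W ≤ cont (W ++ t) := two_mul_cont_le_cont_append
    (fun d hd => pos_of_mem_evenWords hpos hW'.1 d (List.mem_append_right W hd)) htlen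
  have h₁ := hW.2.1
  have h₂ := hW'.2.2
  have : (2 * cont W : ℝ) ≤ cont (W ++ t) := by exact_mod_cast hdouble
  linarith

theorem flatten_mem_evenWords {L : List (List ℕ)} (hL : L ≠ []) (h : ∀ W ∈ L, W ∈ evenWords A) :
    L.flatten ∈ evenWords A := by
  refine ⟨?_, fun d hd => ?_, ?_⟩
  · obtain ⟨W, hW⟩ := List.exists_mem_of_ne_nil L hL
    exact fun hnil => (h W hW).1 (List.flatten_eq_nil_iff.mp hnil W hW)
  · obtain ⟨W, hW, hdW⟩ := List.mem_flatten.mp hd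
    exact (h W hW).2.1 d hdW
  · rw [List.length_flatten]
    exact list_sum_mem (S := AddSubmonoid.even ℕ) fun n hn => by
      obtain ⟨W, hW, rfl⟩ := List.mem_map.mp hn
      exact (h W hW).2.2

theorem card_lt_rpow_of_subset_dyadicShell (hpos : ∀ a ∈ A, 0 < a) {x s : ℝ} (hx : 0 < x)
    (hs : 0 ≤ s) {S : Finset (List ℕ)} (hS : ↑S ⊆ dyadicShell A x)
    (hsum : Summable fun D : evenWords A => (cont D.1 : ℝ) ^ (-s)) :
    (S.card : ℝ) < (2 * x) ^ s := by
  set c : ℝ := (2 * x) ^ (-s) with hc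
  have hmem : ∀ {L : List S}, ∀ W ∈ L.map Subtype.val, W ∈ dyadicShell A x := by
    intro L W hW
    obtain ⟨V, -, rfl⟩ := List.mem_map.mp hW
    exact hS V.2
  let φ : (Σ k : ℕ, List.Vector S (k + 1)) → evenWords A := fun v =>
    ⟨(v.2.1.map Subtype.val).flatten, flatten_mem_evenWords
      (by simp [← List.length_pos_iff, v.2.2]) fun W hW => (hmem W hW).1⟩
  have hφ : Function.Injective φ := by
    intro v w h
    have hflat : v.2.1.map Subtype.val = w.2.1.map Subtype.val :=
      List.injOn_flatten_of_prefix_free (fun h => h.1.1 rfl)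
        (fun _ hW _ hW' => eq_of_prefix_of_mem_dyadicShell hpos hW hW')
        (fun W hW => hmem W hW) (fun W hW => hmem W hW) (congrArg Subtype.val h)
    have hvw := List.map_injective_iff.mpr Subtype.val_injective hflat
    exact Sigma.subtype_ext (by simpa [v.2.2, w.2.2] using congrArg List.length hvw) hvw
  have hterm : ∀ v, c ^ (v.1 + 1) ≤ (cont (φ v).1 : ℝ) ^ (-s) := by
    intro v
    have hle : (cont (φ v).1 : ℝ) ≤ (2 * x) ^ (v.1 + 1) := by
      have := cont_flatten_le (L := v.2.1.map Subtype.val) (y := 2 * x)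
        (fun W hW => pos_of_mem_evenWords hpos (hmem W hW).1)
        (fun W hW => by linarith [(hmem W hW).2.2])
      rwa [List.length_map, v.2.2] at this
    calc c ^ (v.1 + 1) = ((2 * x) ^ (v.1 + 1)) ^ (-s) := Real.rpow_pow_comm (by positivity) _ _
      _ ≤ _ := Real.rpow_le_rpow_of_nonpos
        (by exact_mod_cast cont_pos (pos_of_mem_evenWords hpos (φ v).2)) hle (by linarith)
  have hgeom : Summable fun k : ℕ => (S.card * c) ^ (k + 1) := by
    refine (hsum.comp_injective hφ).sigma.of_nonneg_of_le (fun k => by positivity) fun k => ?_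
    rw [tsum_fintype]
    calc (S.card * c) ^ (k + 1) = ∑ v : List.Vector S (k + 1), c ^ (k + 1) := by
          simp [mul_pow, card_vector]
      _ ≤ _ := Finset.sum_le_sum fun v _ => hterm ⟨k, v⟩
  have hlt : S.card * c < 1 := by
    have := summable_geometric_iff_norm_lt_one.mp
      ((summable_nat_add_iff (f := fun n => ((S.card : ℝ) * c) ^ n) 1).mp hgeom)
    rwa [Real.norm_of_nonneg (by positivity)] at this
  rw [hc, Real.rpow_neg (by positivity), ← div_eq_mul_inv, div_lt_one (by positivity)] at hlt
  exact hlt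

theorem ncard_dyadicShell_le_sq (hpos : ∀ a ∈ A, 0 < a) {x : ℝ} (hx : 0 ≤ x) :
    ((dyadicShell A x).ncard : ℝ) ≤ x ^ 2 :=
  calc ((dyadicShell A x).ncard : ℝ) ≤ {D ∈ evenWords A | (cont D : ℝ) ≤ x}.ncard := by
        exact_mod_cast Set.ncard_le_ncard dyadicShell_subset (finite_evenWords_cont_le hpos x)
    _ ≤ x ^ 2 := ncard_evenWords_cont_le_le hpos hx

theorem ncard_dyadicShell_le_rpow (hpos : ∀ a ∈ A, 0 < a) {x δ : ℝ} (hx : 1 / 2 < x)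
    (hconv : ∀ s : ℝ, 2 * δ < s → Summable fun D : evenWords A => (cont D.1 : ℝ) ^ (-s)) :
    ((dyadicShell A x).ncard : ℝ) ≤ (2 * x) ^ (2 * δ) := by
  by_contra! hN
  have h2x : 1 < 2 * x := by linarith
  have hN₀ : 0 < ((dyadicShell A x).ncard : ℝ) := lt_trans (by positivity) hN
  have hs : 2 * δ < Real.logb (2 * x) (dyadicShell A x).ncard :=
    (Real.lt_logb_iff_rpow_lt h2x hN₀).mpr hN
  have hfin : (dyadicShell A x).Finite :=
    (finite_evenWords_cont_le hpos x).subset dyadicShell_subset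
  have hlt := card_lt_rpow_of_subset_dyadicShell hpos (x := x) (by linarith)
    (Real.logb_nonneg h2x (Nat.one_le_cast.mpr (Nat.cast_pos.mp hN₀)))
    (S := hfin.toFinset) (by simp) (hconv _ hs)
  rw [← Set.ncard_eq_toFinset_card _ hfin, Real.rpow_logb (by linarith) h2x.ne' hN₀] at hlt
  exact lt_irrefl _ hlt

end Counting

theorem dyadic_count_bound_general (A : Finset ℕ) (hA : A.Nonempty) (hpos : ∀ a ∈ A, 1 ≤ a)
    (δ : ℝ)
    (hconv : ∀ s : ℝ, 2 * δ < s →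
      Summable (fun D : {l : List ℕ // l ≠ [] ∧ (∀ d ∈ l, d ∈ A) ∧ Even l.length} =>
        ((cont D.1 : ℝ)) ^ (-s))) :
    ∀ x : ℝ, 4 * (A.max' hA : ℝ) ^ 2 ≤ x →
      (FA A x : ℝ) - (FA A (x / 2) : ℝ) ≤ 4 * x ^ (2 * δ) := by
  intro x hx
  have hx₁ : 1 ≤ x := by
    have : (1 : ℝ) ≤ A.max' hA := by exact_mod_cast hpos _ (A.max'_mem hA)
    nlinarith
  rw [FA_sub_FA_half hpos (by linarith)]
  rcases le_total δ 1 with hδ | hδ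
  · calc ((dyadicShell A x).ncard : ℝ) ≤ (2 * x) ^ (2 * δ) :=
          ncard_dyadicShell_le_rpow hpos (by linarith) hconv
      _ = 2 ^ (2 * δ) * x ^ (2 * δ) := Real.mul_rpow (by norm_num) (by linarith)
      _ ≤ 2 ^ (2 : ℝ) * x ^ (2 * δ) := by
          gcongr
          · norm_num
          · linarith
      _ = 4 * x ^ (2 * δ) := by norm_num
  · calc ((dyadicShell A x).ncard : ℝ) ≤ x ^ (2 : ℝ) := by
          rw [Real.rpow_two]; exact ncard_dyadicShell_le_sq hpos (by linarith)
      _ ≤ x ^ (2 * δ) := Real.rpow_le_rpow_of_exponent_le hx₁ (by linarith)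
      _ ≤ 4 * x ^ (2 * δ) := by linarith [Real.rpow_nonneg (by linarith : 0 ≤ x) (2 * δ)]

/-- If `δ_A > 1/2` and `ζ(s,A²) = ∑_{D ∈ V_{A²}} ⟨D⟩^{-s}` converges for every `s > 2δ_A`,
then `F(x) − F(x/2) ≤ 4 x^{2δ_A}` for every `x ≥ 4·A_max²`. -/
theorem dyadic_count_bound (A : Finset ℕ) (hA : A.Nonempty) (hpos : ∀ a ∈ A, 1 ≤ a)
    (δ : ℝ) (hδ : 1 / 2 < δ)
    (hconv : ∀ s : ℝ, 2 * δ < s →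
      Summable (fun D : {l : List ℕ // l ≠ [] ∧ (∀ d ∈ l, d ∈ A) ∧ Even l.length} =>
        ((cont D.1 : ℝ)) ^ (-s))) :
    ∀ x : ℝ, 4 * (A.max' hA : ℝ) ^ 2 ≤ x →
      (FA A x : ℝ) - (FA A (x / 2) : ℝ) ≤ 4 * x ^ (2 * δ) :=
  dyadic_count_bound_general A hA hpos δ hconv
end

section
/- For any natural numbers d and s with d | s and any ε > 0, the double sum ∑'_{m} ∑'_{n} gcd(m,n,d)^{1/2}/(|m|·|n|), taken over nonzero integers m, n in (−s/2, s/2], is ≪_ε s^ε. -/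
open scoped Classical

/-!
Every common divisor of `m`, `n` and `d` is a divisor `β` of `d`, so
`√gcd(m, n, d) ≤ ∑_{β ∣ d, β ∣ m, β ∣ n} √β`. Exchanging the sums bounds the double sum by
`∑_{β ∣ d} √β · U_β²`, where `U_β = ∑_{β ∣ m} 1/|m| ≤ 2 (1 + log s) / β` because the multiples
of `β` are `β t` with `0 < |t| ≤ s`. Hence the double sum is at most
`4 (1 + log s)² ∑_β β^{-3/2}`, and the series converges while `1 + log s ≪_ε s^{ε/2}`.
-/

open Finset Real

lemma sum_inv_abs_Icc_erase_zero (s : ℕ) :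
    ∑ t ∈ (Icc (-(s : ℤ)) s).erase 0, |(t : ℝ)|⁻¹ = 2 * harmonic s := by
  induction s with
  | zero => simp
  | succ s ih =>
    have hIcc : (Icc (-((s + 1 : ℕ) : ℤ)) (s + 1 : ℕ)).erase 0 =
        insert (-((s : ℤ) + 1)) (insert ((s : ℤ) + 1) ((Icc (-(s : ℤ)) s).erase 0)) := by
      ext t; simp only [mem_erase, mem_Icc, mem_insert]; omega
    rw [hIcc, sum_insert (by simp only [mem_insert, mem_erase, mem_Icc]; omega),
      sum_insert (by simp only [mem_erase, mem_Icc]; omega), ih, harmonic_succ]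
    push_cast
    rw [abs_neg, abs_of_pos (by positivity)]
    ring

lemma sum_inv_abs_filter_dvd_le {β : ℕ} (hβ : β ≠ 0) (s : ℕ) :
    ∑ m ∈ (Icc (-(s : ℤ)) s).erase 0 with (β : ℤ) ∣ m, |(m : ℝ)|⁻¹ ≤
      (β : ℝ)⁻¹ * ∑ t ∈ (Icc (-(s : ℤ)) s).erase 0, |(t : ℝ)|⁻¹ := by
  set B := (Icc (-(s : ℤ)) s).erase 0
  have hsub : {m ∈ B | (β : ℤ) ∣ m} ⊆ B.image ((β : ℤ) * ·) := by
    intro m hm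
    obtain ⟨hmB, k, rfl⟩ := mem_filter.mp hm
    refine mem_image.mpr ⟨k, ?_, rfl⟩
    have hβ1 : (1 : ℤ) ≤ β := by omega
    simp only [B, mem_erase, mem_Icc] at hmB ⊢
    rcases lt_trichotomy k 0 with hk | hk | hk
    · refine ⟨hk.ne, ?_, ?_⟩ <;> nlinarith
    · simp_all
    · refine ⟨hk.ne', ?_, ?_⟩ <;> nlinarith
  calc _ ≤ ∑ m ∈ B.image ((β : ℤ) * ·), |(m : ℝ)|⁻¹ :=
        sum_le_sum_of_subset_of_nonneg hsub fun _ _ _ => by positivity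
    _ = ∑ t ∈ B, |(((β : ℤ) * t : ℤ) : ℝ)|⁻¹ :=
        sum_image fun _ _ _ _ h => mul_left_cancel₀ (by exact_mod_cast hβ) h
    _ = _ := by simp [mul_sum, abs_mul, mul_comm]

lemma sum_inv_abs_filter_dvd_le_log {A : Finset ℤ} {s : ℕ} (hA : A ⊆ (Icc (-(s : ℤ)) s).erase 0)
    {β : ℕ} (hβ : β ≠ 0) :
    ∑ m ∈ A with (β : ℤ) ∣ m, |(m : ℝ)|⁻¹ ≤ (β : ℝ)⁻¹ * (2 * (1 + log s)) :=
  calc _ ≤ ∑ m ∈ (Icc (-(s : ℤ)) s).erase 0 with (β : ℤ) ∣ m, |(m : ℝ)|⁻¹ :=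
        sum_le_sum_of_subset_of_nonneg (filter_subset_filter _ hA) fun _ _ _ => by positivity
    _ ≤ _ := by
        grw [sum_inv_abs_filter_dvd_le hβ, sum_inv_abs_Icc_erase_zero, harmonic_le_one_add_log]

lemma sqrt_gcd_le_sum_divisors {d : ℕ} (hd : d ≠ 0) (m n : ℤ) :
    √(Int.gcd m (Int.gcd n d)) ≤ ∑ β ∈ d.divisors with ↑β ∣ m ∧ ↑β ∣ n, √(β : ℝ) := by
  set g := Int.gcd m (Int.gcd n d)
  have hg_dvd : (g : ℤ) ∣ Int.gcd n d := Int.gcd_dvd_right _ _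
  have hg : g ∈ d.divisors.filter fun β : ℕ => (β : ℤ) ∣ m ∧ (β : ℤ) ∣ n := by
    refine mem_filter.mpr ⟨Nat.mem_divisors.mpr ⟨?_, hd⟩, Int.gcd_dvd_left _ _,
      hg_dvd.trans (Int.gcd_dvd_left _ _)⟩
    exact_mod_cast hg_dvd.trans (Int.gcd_dvd_right n d)
  exact single_le_sum (f := fun β : ℕ => √(β : ℝ)) (fun β _ => sqrt_nonneg β) hg

lemma sum_sum_sqrt_gcd_div_le {d : ℕ} (hd : d ≠ 0) (A : Finset ℤ) :
    ∑ m ∈ A, ∑ n ∈ A, √(Int.gcd m (Int.gcd n d)) / (|(m : ℝ)| * |(n : ℝ)|) ≤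
      ∑ β ∈ d.divisors, √β * (∑ m ∈ A with (β : ℤ) ∣ m, |(m : ℝ)|⁻¹) ^ 2 := by
  calc _ ≤ ∑ m ∈ A, ∑ n ∈ A, ∑ β ∈ d.divisors with ↑β ∣ m ∧ ↑β ∣ n,
          √(β : ℝ) * (|(m : ℝ)|⁻¹ * |(n : ℝ)|⁻¹) := by
        gcongr with m _ n _
        rw [div_eq_mul_inv, mul_inv, ← sum_mul]
        gcongr
        exact sqrt_gcd_le_sum_divisors hd m n
    _ = _ := by
        simp_rw [sum_filter]
        rw [sum_comm]
        simp_rw [sum_comm (s := A) (t := d.divisors), sq, sum_mul_sum, mul_sum]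
        refine sum_congr rfl fun β _ => sum_congr rfl fun m _ => sum_congr rfl fun n _ => ?_
        split_ifs <;> simp_all [mul_comm]

lemma one_add_log_le_mul_rpow {x : ℝ} (hx : 1 ≤ x) {ε : ℝ} (hε : 0 < ε) :
    1 + log x ≤ (1 + ε⁻¹) * x ^ ε := by
  have h1 : 1 ≤ x ^ ε := one_le_rpow hx hε.le
  have h2 : log x ≤ x ^ ε / ε := log_le_rpow_div (by linarith) hε
  rw [div_eq_inv_mul] at h2
  nlinarith [inv_pos.mpr hε]

lemma summable_sqrt_mul_inv_sq : Summable fun n : ℕ => √n * ((n : ℝ)⁻¹) ^ 2 := by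
  refine (Real.summable_nat_rpow.mpr (by norm_num : (-(3 / 2) : ℝ) < -1)).congr fun n => ?_
  rw [sqrt_eq_rpow, ← rpow_neg_one, ← rpow_natCast, ← rpow_mul (by positivity), ← rpow_add']
  all_goals norm_num

/-- For `d ∣ s` and any `ε > 0`, the double sum
`∑'_{m} ∑'_{n} gcd(m,n,d)^{1/2}/(|m||n|)` over nonzero `m,n ∈ (−s/2, s/2]` is `≪_ε s^ε`. -/
theorem gcd_double_harmonic_sum (ε : ℝ) (hε : 0 < ε) :
    ∃ C : ℝ, 0 < C ∧ ∀ d s : ℕ, d ∣ s →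
      ∑ m ∈ (Finset.Icc (-(s : ℤ)) (s : ℤ)).filter
          (fun m : ℤ => m ≠ 0 ∧ -(s : ℝ) / 2 < (m : ℝ) ∧ (m : ℝ) ≤ (s : ℝ) / 2),
        ∑ n ∈ (Finset.Icc (-(s : ℤ)) (s : ℤ)).filter
            (fun n : ℤ => n ≠ 0 ∧ -(s : ℝ) / 2 < (n : ℝ) ∧ (n : ℝ) ≤ (s : ℝ) / 2),
          (fun m n : ℤ =>
            Real.sqrt (Int.gcd m (Int.gcd n (d : ℤ))) / (|(m : ℝ)| * |(n : ℝ)|)) m n ≤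
        C * (s : ℝ) ^ ε := by
  set K := ∑' n : ℕ, √n * ((n : ℝ)⁻¹) ^ 2
  have hK : 0 < K := summable_sqrt_mul_inv_sq.tsum_pos (fun _ => by positivity) 1 (by norm_num)
  refine ⟨K * (2 * (1 + (ε / 2)⁻¹)) ^ 2, by positivity, fun d s hds => ?_⟩
  set A := (Icc (-(s : ℤ)) s).filter
    (fun m : ℤ => m ≠ 0 ∧ -(s : ℝ) / 2 < m ∧ (m : ℝ) ≤ s / 2)
  have hA : A ⊆ (Icc (-(s : ℤ)) s).erase 0 := fun m hm =>
    mem_erase.mpr ⟨(mem_filter.mp hm).2.1, (mem_filter.mp hm).1⟩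
  rcases Nat.eq_zero_or_pos s with rfl | hs
  · simp [subset_empty.mp (by simpa using hA), zero_rpow hε.ne']
  have hd : d ≠ 0 := by rintro rfl; exact hs.ne' (zero_dvd_iff.mp hds)
  have hlog : 1 + log s ≤ (1 + (ε / 2)⁻¹) * (s : ℝ) ^ (ε / 2) :=
    one_add_log_le_mul_rpow (by exact_mod_cast hs) (by positivity)
  calc _ ≤ ∑ β ∈ d.divisors, √β * (∑ m ∈ A with (β : ℤ) ∣ m, |(m : ℝ)|⁻¹) ^ 2 :=
        sum_sum_sqrt_gcd_div_le hd A
    _ ≤ ∑ β ∈ d.divisors, √β * ((β : ℝ)⁻¹ * (2 * (1 + log s))) ^ 2 := by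
        gcongr with β hβ
        exact sum_inv_abs_filter_dvd_le_log hA (Nat.pos_of_mem_divisors hβ).ne'
    _ = (∑ β ∈ d.divisors, √β * ((β : ℝ)⁻¹) ^ 2) * (2 * (1 + log s)) ^ 2 := by
        rw [sum_mul]
        exact sum_congr rfl fun _ _ => by ring
    _ ≤ K * (2 * ((1 + (ε / 2)⁻¹) * (s : ℝ) ^ (ε / 2))) ^ 2 := by
        gcongr
        exact summable_sqrt_mul_inv_sq.sum_le_tsum _ fun _ _ => by positivity
    _ = K * (2 * (1 + (ε / 2)⁻¹)) ^ 2 * (s : ℝ) ^ ε := by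
        rw [mul_pow, mul_pow, ← rpow_mul_natCast s.cast_nonneg]
        ring_nf
end

section
/- Let W be a finite set with |W| > 10 and f : W → ℝ≥0. Suppose there exist nonnegative constants c₁, c₂ such that for every subset Z ⊆ W, ∑_{θ∈Z} f(θ) ≤ c₁·|Z|^{1/2} + c₂. Then ∑_{θ∈W} f(θ)² ≪ c₁²·log|W| + c₂·max_{θ∈W} f(θ), with an absolute implied constant. -/
set_option maxHeartbeats 1000000 in
/-- If for every subset `Z ⊆ W` one has `∑_{θ∈Z} f(θ) ≤ c₁|Z|^{1/2} + c₂` with `f ≥ 0`,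
then `∑_{θ∈W} f(θ)² ≪ c₁² log|W| + c₂ max_{θ∈W} f(θ)` with an absolute constant. -/
theorem l1_to_l2 :
    ∃ C : ℝ, 0 < C ∧ ∀ {α : Type} (W : Finset α) (hne : W.Nonempty) (f : α → ℝ)
      (c₁ c₂ : ℝ), (∀ θ ∈ W, 0 ≤ f θ) → 0 ≤ c₁ → 0 ≤ c₂ → 10 < W.card →
      (∀ Z ⊆ W, ∑ θ ∈ Z, f θ ≤ c₁ * Real.sqrt Z.card + c₂) →
      ∑ θ ∈ W, (f θ) ^ 2 ≤
        C * (c₁ ^ 2 * Real.log W.card + c₂ * W.sup' hne f) := by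
  refine ⟨100, by norm_num, ?_⟩
  intro α W hne f c₁ c₂ hf hc₁ hc₂ hcard hsum
  classical
  set M := W.sup' hne f with hMdef
  set n := W.card with hndef
  have hn11 : (11:ℝ) ≤ (n:ℝ) := by exact_mod_cast (by omega : 11 ≤ n)
  have hnpos : (0:ℝ) < n := by linarith
  -- log n ≥ 2
  have hlogn : 2 ≤ Real.log n := by
    rw [Real.le_log_iff_exp_le hnpos]
    have e2 : Real.exp 2 = Real.exp 1 * Real.exp 1 := by
      rw [← Real.exp_add]; norm_num
    have := Real.exp_one_lt_d9
    have := Real.exp_pos 1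
    nlinarith
  have hM0 : 0 ≤ M := by
    obtain ⟨θ₀, hθ₀⟩ := hne
    exact le_trans (hf θ₀ hθ₀) (Finset.le_sup' f hθ₀)
  have hfM : ∀ θ ∈ W, f θ ≤ M := fun θ h => Finset.le_sup' f h
  -- M ≤ c₁ + c₂
  have hMle : M ≤ c₁ + c₂ := by
    obtain ⟨θ₀, hθ₀, hMeq⟩ := Finset.exists_mem_eq_sup' hne f
    have h1 : ∑ θ ∈ ({θ₀} : Finset α), f θ ≤ c₁ * Real.sqrt (({θ₀} : Finset α).card) + c₂ :=
      hsum _ (Finset.singleton_subset_iff.mpr hθ₀)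
    simp at h1
    have hM' : M = f θ₀ := hMeq
    rw [hM']
    linarith
  have hM2 : M ^ 2 ≤ (4/3) * (c₁^2 + c₂ * M) := by
    nlinarith [sq_nonneg (M - 2*c₁), mul_le_mul_of_nonneg_left hMle hM0]
  rcases eq_or_lt_of_le hM0 with hM0eq | hMpos
  · -- M = 0 case
    have hz : ∑ θ ∈ W, f θ ^ 2 = 0 := by
      apply Finset.sum_eq_zero
      intro θ hθ
      have := hf θ hθ
      have := hfM θ hθ
      nlinarith
    rw [hz, ← hM0eq]
    nlinarith [sq_nonneg c₁]
  -- counting lemma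
  have countA : ∀ t : ℝ, 0 < t →
      t^2 * ((W.filter (fun θ => t < f θ)).card : ℝ) ≤ (4/3)*c₁^2 + (4/3)*c₂*t := by
    intro t ht
    set Z := W.filter (fun θ => t < f θ) with hZ
    have h1 : (Z.card : ℝ) * t ≤ ∑ θ ∈ Z, f θ := by
      have := Finset.card_nsmul_le_sum Z f t
        (fun x hx => le_of_lt (Finset.mem_filter.mp hx).2)
      simpa [nsmul_eq_mul] using this
    have h2 : ∑ θ ∈ Z, f θ ≤ c₁ * Real.sqrt Z.card + c₂ :=
      hsum Z (Finset.filter_subset _ _)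
    set s := Real.sqrt (Z.card : ℝ) with hs
    have hs0 : 0 ≤ s := Real.sqrt_nonneg _
    have hs2 : s^2 = (Z.card : ℝ) := Real.sq_sqrt (Nat.cast_nonneg _)
    have h3 : (Z.card : ℝ) * t ≤ c₁ * s + c₂ := le_trans h1 h2
    nlinarith [sq_nonneg (t*s - 2*c₁), mul_le_mul_of_nonneg_left h3 ht.le]
  -- dyadic level sets
  set G : ℕ → Finset α := fun j => W.filter (fun θ => M / 2^j < f θ) with hGdef
  have hG0 : G 0 = ∅ := by
    simp only [hGdef, pow_zero, div_one]
    rw [Finset.filter_eq_empty_iff]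
    intro θ hθ
    exact not_lt.mpr (hfM θ hθ)
  have hGmono : ∀ j, G j ⊆ G (j+1) := by
    intro j x hx
    simp only [hGdef, Finset.mem_filter] at hx ⊢
    refine ⟨hx.1, lt_of_le_of_lt ?_ hx.2⟩
    have hpj : (0:ℝ) < 2^j := by positivity
    have hpe : (2:ℝ)^(j+1) = 2*2^j := by ring
    exact div_le_div_of_nonneg_left hM0 hpj (by linarith)
  -- per-level bound
  have level : ∀ j : ℕ, ∑ θ ∈ G (j+1) \ G j, f θ ^ 2 ≤
      (16/3)*c₁^2 + (16/3)*c₂*(M * (1/2)^(j+1)) := by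
    intro j
    set t := M / 2^(j+1) with htdef
    have ht : 0 < t := by positivity
    have h2t : 2*t = M / 2^j := by
      rw [htdef, pow_succ]; field_simp
    have hbound : ∀ θ ∈ G (j+1) \ G j, f θ ^ 2 ≤ 4*t^2 := by
      intro θ hθ
      rw [Finset.mem_sdiff] at hθ
      have h1 : θ ∈ W := (Finset.mem_filter.mp hθ.1).1
      have h2 : ¬ (M/2^j < f θ) := fun h => hθ.2 (Finset.mem_filter.mpr ⟨h1, h⟩)
      push_neg at h2
      have h0 : 0 ≤ f θ := hf θ h1
      nlinarith
    have hcardle : ((G (j+1) \ G j).card : ℝ) ≤ ((G (j+1)).card : ℝ) := by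
      exact_mod_cast Finset.card_le_card Finset.sdiff_subset
    have hCA := countA t ht
    have hGeq : G (j+1) = W.filter (fun θ => t < f θ) := by simp only [hGdef, htdef]
    rw [← hGeq] at hCA
    have htM : t = M * (1/2)^(j+1) := by
      rw [htdef, one_div, inv_pow, div_eq_mul_inv]
    calc ∑ θ ∈ G (j+1) \ G j, f θ ^ 2
        ≤ ∑ _θ ∈ G (j+1) \ G j, 4*t^2 := Finset.sum_le_sum hbound
      _ = ((G (j+1) \ G j).card : ℝ) * (4*t^2) := by
          rw [Finset.sum_const, nsmul_eq_mul]
      _ ≤ ((G (j+1)).card : ℝ) * (4*t^2) := by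
          apply mul_le_mul_of_nonneg_right hcardle (by positivity)
      _ = 4 * (t^2 * ((G (j+1)).card : ℝ)) := by ring
      _ ≤ 4 * ((4/3)*c₁^2 + (4/3)*c₂*t) := by linarith
      _ = (16/3)*c₁^2 + (16/3)*c₂*(M * (1/2)^(j+1)) := by rw [htM]; ring
  -- telescoping
  have tele : ∀ J : ℕ, ∑ θ ∈ G J, f θ ^ 2 ≤
      (16/3)*c₁^2 * J + (16/3)*c₂*M*(1 - (1/2:ℝ)^J) := by
    intro J
    induction J with
    | zero => rw [hG0]; norm_num
    | succ J ih =>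
      have hsplit : ∑ θ ∈ G (J+1) \ G J, f θ^2 + ∑ θ ∈ G J, f θ^2
          = ∑ θ ∈ G (J+1), f θ^2 := Finset.sum_sdiff (hGmono J)
      have hlev := level J
      have e2 : ((1:ℝ)/2)^(J+1) = (1/2)^J * (1/2) := pow_succ _ _
      have hcast : ((J+1 : ℕ) : ℝ) = (J:ℝ) + 1 := by push_cast; ring
      rw [← hsplit, hcast]
      rw [e2] at hlev ⊢
      linarith
  -- choose J
  obtain ⟨J, hJ1, h2J, hlt⟩ :
      ∃ J : ℕ, 1 ≤ J ∧ (n:ℝ) ≤ 2^J ∧ (2:ℕ)^(J-1) < n := by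
    refine ⟨Nat.clog 2 n, Nat.clog_pos (by norm_num) (by omega), ?_, ?_⟩
    · exact_mod_cast Nat.le_pow_clog (by norm_num : 1 < 2) n
    · exact Nat.pow_pred_clog_lt_self (by norm_num) (by omega)
  have hJlog : (J:ℝ) ≤ 3 * Real.log n := by
    have hltR : (2:ℝ)^(J-1) ≤ (n:ℝ) := by exact_mod_cast hlt.le
    have hlog : ((J-1 : ℕ):ℝ) * Real.log 2 ≤ Real.log n := by
      rw [← Real.log_pow]
      exact Real.log_le_log (by positivity) hltR
    have hcast : ((J-1 : ℕ):ℝ) = (J:ℝ) - 1 := by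
      rw [Nat.cast_sub hJ1]; norm_num
    rw [hcast] at hlog
    have hl2 : (1/2 : ℝ) ≤ Real.log 2 := by
      linarith [Real.log_two_gt_d9]
    have hJ1R : (1:ℝ) ≤ (J:ℝ) := by exact_mod_cast hJ1
    have h5 : ((J:ℝ) - 1) * (1/2) ≤ ((J:ℝ) - 1) * Real.log 2 :=
      mul_le_mul_of_nonneg_left hl2 (by linarith)
    linarith
  -- tail bound
  have hGW : G J ⊆ W := Finset.filter_subset _ _
  have h2Jpos : (0:ℝ) < 2^J := by positivity
  have hsqrtn3 : 3 ≤ Real.sqrt n := by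
    rw [show (3:ℝ) = Real.sqrt 9 by rw [show (9:ℝ) = 3^2 by norm_num, Real.sqrt_sq]; norm_num]
    exact Real.sqrt_le_sqrt (by linarith)
  have hsqrtn_le : Real.sqrt n * 3 ≤ (n:ℝ) := by
    have h1 : Real.sqrt n * Real.sqrt n = (n:ℝ) := Real.mul_self_sqrt hnpos.le
    nlinarith [Real.sqrt_nonneg (n:ℝ)]
  have tail : ∑ θ ∈ W \ G J, f θ ^ 2 ≤ M*c₁/3 + M*c₂ := by
    have hfle : ∀ θ ∈ W \ G J, f θ ≤ M / 2^J := by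
      intro θ hθ
      rw [Finset.mem_sdiff] at hθ
      have h2 : ¬ (M/2^J < f θ) := fun h => hθ.2 (Finset.mem_filter.mpr ⟨hθ.1, h⟩)
      linarith [not_lt.mp h2]
    have h1 : ∑ θ ∈ W \ G J, f θ ^ 2 ≤ (M/2^J) * ∑ θ ∈ W \ G J, f θ := by
      rw [Finset.mul_sum]
      apply Finset.sum_le_sum
      intro θ hθ
      have h0 : 0 ≤ f θ := hf θ (Finset.mem_sdiff.mp hθ).1
      have := hfle θ hθ
      nlinarith
    have h2 : ∑ θ ∈ W \ G J, f θ ≤ c₁ * Real.sqrt n + c₂ := by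
      refine le_trans (hsum _ Finset.sdiff_subset) ?_
      have hcle : ((W \ G J).card : ℝ) ≤ (n:ℝ) := by
        exact_mod_cast Finset.card_le_card Finset.sdiff_subset
      have := Real.sqrt_le_sqrt hcle
      nlinarith [Real.sqrt_nonneg ((W \ G J).card : ℝ)]
    have h3 : (M/2^J) * ∑ θ ∈ W \ G J, f θ ≤ (M/n) * (c₁ * Real.sqrt n + c₂) := by
      have hs0 : 0 ≤ ∑ θ ∈ W \ G J, f θ :=
        Finset.sum_nonneg (fun θ hθ => hf θ (Finset.mem_sdiff.mp hθ).1)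
      have hd : M/2^J ≤ M/n := by
        apply div_le_div_of_nonneg_left hM0 hnpos h2J
      have hpos2 : 0 ≤ c₁ * Real.sqrt n + c₂ := by positivity
      have := mul_le_mul hd h2 hs0 (by positivity : (0:ℝ) ≤ M/n)
      linarith
    have h4 : (M/n) * (c₁ * Real.sqrt n + c₂) ≤ M*c₁/3 + M*c₂ := by
      rw [div_mul_eq_mul_div, div_le_iff₀ hnpos]
      have e1 : M * c₁ * Real.sqrt n * 3 ≤ M * c₁ * (n:ℝ) := by
        have := mul_le_mul_of_nonneg_left hsqrtn_le (mul_nonneg hM0 hc₁)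
        nlinarith [mul_nonneg hM0 hc₁]
      nlinarith [mul_nonneg hM0 hc₂, mul_nonneg hM0 hc₁, Real.sqrt_nonneg (n:ℝ)]
    linarith
  -- assemble
  have hsplit : ∑ θ ∈ W \ G J, f θ^2 + ∑ θ ∈ G J, f θ^2 = ∑ θ ∈ W, f θ^2 :=
    Finset.sum_sdiff hGW
  have hteleJ := tele J
  have hhalf : (0:ℝ) ≤ (1/2:ℝ)^J := by positivity
  have hmain : ∑ θ ∈ W, f θ^2 ≤ (16/3)*c₁^2 * J + (16/3)*c₂*M + M*c₁/3 + M*c₂ := by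
    nlinarith [mul_nonneg (mul_nonneg hc₂ hM0) hhalf]
  have hfin1 : c₁^2 * (J:ℝ) ≤ c₁^2 * (3 * Real.log n) :=
    mul_le_mul_of_nonneg_left hJlog (sq_nonneg c₁)
  have hfin2 : c₁^2 * 2 ≤ c₁^2 * Real.log n :=
    mul_le_mul_of_nonneg_left hlogn (sq_nonneg c₁)
  nlinarith [mul_nonneg hc₂ hM0, sq_nonneg (M - c₁), hM2, hmain, hfin1, hfin2]
end

section
/- Let s ≥ 1 be an integer, Q₁ ≤ Q₂ reals in [0,s], f a nonincreasing function on [0,s] with f(0) ≤ s, and T a positive integer. Suppose that for any box (Q, Q+P₁] × (0, P₂] the count ∑ δ_s(uv ± 1) over integer points equals (φ(s)/s²)·P₁P₂ + O(ψ(s)) for some function ψ. Then ∑_{Q₁ < u ≤ Q₂} ∑_{0 < v ≤ f(u)} δ_s(uv ± 1) = (φ(s)/s²)·∫_{Q₁}^{Q₂} f(u) du + O((φ(s)/s²)·((Q₂−Q₁)/T)·(f(Q₁) − f(Q₂))) + O(T·ψ(s)). -/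
/-!
Cut `(Q₁, Q₂]` into `T` strips of width `h = (Q₂ - Q₁) / T`. On a strip `(a, a + h]` the
nonincreasing `f` lies between `f (a + h)` and `f a`, so the count under its graph is squeezed
between two box counts and its integral between `h f (a + h)` and `h f a`. The box asymptotic
then bounds the error on the strip by `(φ(s)/s²) h (f a - f (a + h)) + ψ`, and these errors
telescope.
-/

open scoped Classical

open Finset Set

theorem AntitoneOn.sub_mul_le_intervalIntegral {f : ℝ → ℝ} {a b : ℝ}
    (hf : AntitoneOn f (Icc a b)) (hab : a ≤ b) : (b - a) * f b ≤ ∫ x in a..b, f x := by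
  have := intervalIntegral.integral_mono_on (μ := MeasureTheory.volume) hab intervalIntegrable_const
    (uIcc_of_le hab ▸ hf).intervalIntegrable fun x hx => hf hx (right_mem_Icc.2 hab) hx.2
  simpa using this

theorem AntitoneOn.intervalIntegral_le_sub_mul {f : ℝ → ℝ} {a b : ℝ}
    (hf : AntitoneOn f (Icc a b)) (hab : a ≤ b) : ∫ x in a..b, f x ≤ (b - a) * f a := by
  have := intervalIntegral.integral_mono_on (μ := MeasureTheory.volume) hab
    (uIcc_of_le hab ▸ hf).intervalIntegrable intervalIntegrable_const
    fun x hx => hf (left_mem_Icc.2 hab) hx hx.1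
  simpa using this

theorem abs_sum_range_sub_sum_range_le_of_telescoping {x y g : ℕ → ℝ} {c ψ : ℝ} {n : ℕ}
    (h : ∀ i < n, |x i - y i| ≤ c * (g i - g (i + 1)) + ψ) :
    |∑ i ∈ range n, x i - ∑ i ∈ range n, y i| ≤ c * (g 0 - g n) + n * ψ := by
  rw [← sum_sub_distrib]
  calc _ ≤ ∑ i ∈ range n, |x i - y i| := abs_sum_le_sum_abs _ _
    _ ≤ ∑ i ∈ range n, (c * (g i - g (i + 1)) + ψ) :=
        sum_le_sum fun i hi => h i (mem_range.1 hi)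
    _ = c * (g 0 - g n) + n * ψ := by
        rw [sum_add_distrib, ← mul_sum, sum_range_sub' g n, sum_const, card_range, nsmul_eq_mul]

noncomputable def regionCount (s : ℕ) (sgn : ℤ) (a b : ℝ) (g : ℝ → ℝ) : ℝ :=
  ∑ u ∈ Finset.Icc (1 : ℤ) (s : ℤ), ∑ v ∈ Finset.Icc (1 : ℤ) (s : ℤ),
    if a < (u : ℝ) ∧ (u : ℝ) ≤ b ∧ (v : ℝ) ≤ g u ∧ (s : ℤ) ∣ (u * v + sgn) then (1 : ℝ) else 0

section regionCount

variable {s : ℕ} {sgn : ℤ} {a b c D ψ : ℝ} {f g g' : ℝ → ℝ}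

theorem regionCount_add (hab : a ≤ b) (hbc : b ≤ c) :
    regionCount s sgn a b g + regionCount s sgn b c g = regionCount s sgn a c g := by
  unfold regionCount
  rw [← sum_add_distrib]
  refine sum_congr rfl fun u _ => ?_
  rw [← sum_add_distrib]
  refine sum_congr rfl fun v _ => ?_
  by_cases hub : (u : ℝ) ≤ b
  · have : ¬ b < (u : ℝ) := not_lt.2 hub
    by_cases hau : a < (u : ℝ) <;> simp [hub, this, hau, hub.trans hbc]
  · have hbu : b < (u : ℝ) := not_le.1 hub
    simp [hub, hbu, hab.trans_lt hbu]

theorem sum_regionCount_of_monotone {Q : ℕ → ℝ} (hQ : Monotone Q) (n : ℕ) :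
    ∑ i ∈ range n, regionCount s sgn (Q i) (Q (i + 1)) g = regionCount s sgn (Q 0) (Q n) g := by
  induction n with
  | zero =>
    exact (sum_eq_zero fun u _ => sum_eq_zero fun v _ => if_neg fun h => h.1.not_ge h.2.1).symm
  | succ n ih => rw [sum_range_succ, ih, regionCount_add (hQ n.zero_le) (hQ n.le_succ)]

theorem regionCount_mono (hg : ∀ u ∈ Ioc a b, g u ≤ g' u) :
    regionCount s sgn a b g ≤ regionCount s sgn a b g' := by
  refine sum_le_sum fun u _ => sum_le_sum fun v _ => ?_
  by_cases h : a < (u : ℝ) ∧ (u : ℝ) ≤ b ∧ (v : ℝ) ≤ g u ∧ (s : ℤ) ∣ (u * v + sgn)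
  · obtain ⟨hau, hub, hv, hdvd⟩ := h
    rw [if_pos ⟨hau, hub, hv, hdvd⟩, if_pos ⟨hau, hub, hv.trans (hg u ⟨hau, hub⟩), hdvd⟩]
  · rw [if_neg h]
    split_ifs <;> norm_num

theorem abs_regionCount_sub_integral_le (hf : AntitoneOn f (Icc a b)) (hab : a ≤ b)
    (hD : 0 ≤ D)
    (hupper : |regionCount s sgn a b (fun _ => f a) - D * (b - a) * f a| ≤ ψ)
    (hlower : |regionCount s sgn a b (fun _ => f b) - D * (b - a) * f b| ≤ ψ) :
    |regionCount s sgn a b f - D * ∫ x in a..b, f x| ≤ D * (b - a) * (f a - f b) + ψ := by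
  have hcount_le : regionCount s sgn a b f ≤ regionCount s sgn a b (fun _ => f a) :=
    regionCount_mono fun u hu => hf (left_mem_Icc.2 hab) (Ioc_subset_Icc_self hu) hu.1.le
  have hle_count : regionCount s sgn a b (fun _ => f b) ≤ regionCount s sgn a b f :=
    regionCount_mono fun u hu => hf (Ioc_subset_Icc_self hu) (right_mem_Icc.2 hab) hu.2
  have hintegral_le := mul_le_mul_of_nonneg_left (hf.intervalIntegral_le_sub_mul hab) hD
  have hle_integral := mul_le_mul_of_nonneg_left (hf.sub_mul_le_intervalIntegral hab) hD
  rw [abs_le] at hupper hlower ⊢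
  constructor <;> nlinarith

theorem abs_regionCount_sub_integral_le_of_partition {Q : ℕ → ℝ} {n : ℕ} {h : ℝ}
    (hQ : ∀ i, Q (i + 1) - Q i = h) (hh : 0 ≤ h) (hf : AntitoneOn f (Icc (Q 0) (Q n)))
    (hD : 0 ≤ D)
    (hbox : ∀ i < n, ∀ x ∈ Icc (Q 0) (Q n),
      |regionCount s sgn (Q i) (Q (i + 1)) (fun _ => f x) - D * h * f x| ≤ ψ) :
    |regionCount s sgn (Q 0) (Q n) f - D * ∫ x in Q 0..Q n, f x| ≤
      D * h * (f (Q 0) - f (Q n)) + n * ψ := by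
  have hQ_mono : Monotone Q := monotone_nat_of_le_succ fun i => by linarith [hQ i]
  have hsub : ∀ i < n, Icc (Q i) (Q (i + 1)) ⊆ Icc (Q 0) (Q n) := fun i hi =>
    Icc_subset_Icc (hQ_mono i.zero_le) (hQ_mono hi)
  have hint : ∀ i < n, IntervalIntegrable f MeasureTheory.volume (Q i) (Q (i + 1)) := fun i hi =>
    ((hf.mono (hsub i hi)).mono (uIcc_of_le (hQ_mono i.le_succ)).subset).intervalIntegrable
  rw [← sum_regionCount_of_monotone hQ_mono, ← intervalIntegral.sum_integral_adjacent_intervals hint,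
    mul_sum]
  refine abs_sum_range_sub_sum_range_le_of_telescoping (g := fun i => f (Q i)) fun i hi => ?_
  have hi_mem : Q i ∈ Icc (Q 0) (Q n) := hsub i hi (left_mem_Icc.2 (hQ_mono i.le_succ))
  have hi_succ_mem : Q (i + 1) ∈ Icc (Q 0) (Q n) := hsub i hi (right_mem_Icc.2 (hQ_mono i.le_succ))
  simpa only [hQ i] using abs_regionCount_sub_integral_le (hf.mono (hsub i hi))
    (hQ_mono i.le_succ) hD (by simpa only [hQ i] using hbox i hi _ hi_mem)
    (by simpa only [hQ i] using hbox i hi _ hi_succ_mem)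

end regionCount

/-- Ustinov-type smoothing: if box counts of solutions of `uv ≡ ∓1 (mod s)` satisfy
the asymptotic `(φ(s)/s²)P₁P₂ + O(ψ)`, then for a nonincreasing `f` the count under the
graph of `f` equals `(φ(s)/s²)∫f + O((φ(s)/s²)((Q₂−Q₁)/T)(f(Q₁)−f(Q₂))) + O(Tψ)`. -/
theorem hyperbolic_region_count :
    ∃ C : ℝ, 0 < C ∧
      ∀ (s : ℕ), 1 ≤ s → ∀ (Q₁ Q₂ : ℝ), 0 ≤ Q₁ → Q₁ ≤ Q₂ → Q₂ ≤ (s : ℝ) →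
      ∀ (f : ℝ → ℝ), AntitoneOn f (Set.Icc (0 : ℝ) (s : ℝ)) →
        (∀ u ∈ Set.Icc (0 : ℝ) (s : ℝ), 0 ≤ f u) → f 0 ≤ (s : ℝ) →
      ∀ (T : ℕ), 1 ≤ T → ∀ (ψ : ℝ), 0 ≤ ψ →
      ∀ (sgn : ℤ), sgn = 1 ∨ sgn = -1 →
      (∀ Q P₁ P₂ : ℝ, 0 ≤ P₁ → P₁ ≤ (s : ℝ) → 0 ≤ P₂ → P₂ ≤ (s : ℝ) →
        |(∑ u ∈ Finset.Icc (1 : ℤ) (s : ℤ), ∑ v ∈ Finset.Icc (1 : ℤ) (s : ℤ),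
            if Q < (u : ℝ) ∧ (u : ℝ) ≤ Q + P₁ ∧ (v : ℝ) ≤ P₂ ∧ (s : ℤ) ∣ (u * v + sgn)
            then (1 : ℝ) else 0) -
          ((Nat.totient s : ℝ) / (s : ℝ) ^ 2) * P₁ * P₂| ≤ ψ) →
      |(∑ u ∈ Finset.Icc (1 : ℤ) (s : ℤ), ∑ v ∈ Finset.Icc (1 : ℤ) (s : ℤ),
          if Q₁ < (u : ℝ) ∧ (u : ℝ) ≤ Q₂ ∧ (v : ℝ) ≤ f u ∧ (s : ℤ) ∣ (u * v + sgn)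
          then (1 : ℝ) else 0) -
        ((Nat.totient s : ℝ) / (s : ℝ) ^ 2) * ∫ u in Q₁..Q₂, f u| ≤
        C * (((Nat.totient s : ℝ) / (s : ℝ) ^ 2) * ((Q₂ - Q₁) / T) * (f Q₁ - f Q₂)
          + T * ψ) := by
  refine ⟨1, one_pos, fun s _ Q₁ Q₂ hQ₁ hQ₁₂ hQ₂ f hf hf_nonneg hf_zero T hT ψ _ sgn _ hbox => ?_⟩
  set D : ℝ := (Nat.totient s : ℝ) / (s : ℝ) ^ 2
  set h : ℝ := (Q₂ - Q₁) / T with h_def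
  have hT_pos : (0 : ℝ) < T := by exact_mod_cast hT
  have hh : 0 ≤ h := div_nonneg (sub_nonneg.2 hQ₁₂) hT_pos.le
  have hh_le : h ≤ s :=
    (div_le_self (sub_nonneg.2 hQ₁₂) (by exact_mod_cast hT)).trans (by linarith)
  set Q : ℕ → ℝ := fun i => Q₁ + i * h
  have hQ : ∀ i, Q (i + 1) - Q i = h := fun i => by simp only [Q]; push_cast; ring
  have hQ_zero : Q 0 = Q₁ := by simp [Q]
  have hQ_T : Q T = Q₂ := by simp only [Q, h_def]; field_simp; ring
  have hsub : Icc Q₁ Q₂ ⊆ Icc 0 (s : ℝ) := Icc_subset_Icc hQ₁ hQ₂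
  have hf_le : ∀ x ∈ Icc 0 (s : ℝ), f x ≤ s := fun x hx =>
    (hf (left_mem_Icc.2 (hx.1.trans hx.2)) hx hx.1).trans hf_zero
  have key := abs_regionCount_sub_integral_le_of_partition (s := s) (sgn := sgn) (D := D) hQ hh
    (hQ_zero ▸ hQ_T ▸ hf.mono hsub) (by positivity) fun i _ x hx => by
      rw [hQ_zero, hQ_T] at hx
      have hQ_add : Q i + h = Q (i + 1) := by linarith [hQ i]
      have hx_box := hbox (Q i) h (f x) hh hh_le (hf_nonneg x (hsub hx)) (hf_le x (hsub hx))
      rw [hQ_add] at hx_box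
      exact hx_box
  rw [hQ_zero, hQ_T] at key
  rw [one_mul]
  exact key
end
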